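/- arXiv:2209.11833 — 11 statements merged into one kernel-verified Lean document; each statement's English description precedes it below -/
import Mathlib

section
/- For all integers n ≥ 0, E^W_{n+3} = ((3n+7)·2^{n-1} + (-1)^n)/(9·2^n). -/
/-- With `EW` the expected number of napkinless diners under
Winkler's trap-setting algorithm (defined by its recurrence), for all `n ≥ 0`,
`EW (n+3) = ((3n+7)·2^(n-1) + (-1)^n) / (9·2^n)`. -/
theorem stmt_0 (EW : ℕ → ℚ)
    (h1 : EW 1 = 0) (h2 : EW 2 = 0) (h3 : EW 3 = 1/2)
    (hrec : ∀ n, 4 ≤ n → EW n = EW (n-1)/2 + EW (n-2)/2 + 1/4) :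
    ∀ n : ℕ, EW (n+3) = ((3*(n:ℚ)+7) * (2:ℚ)^((n:ℤ)-1) + (-1)^n) / (9 * 2^n) := by
  intro n
  induction n using Nat.twoStepInduction with
  | zero => norm_num [h3]
  | one =>
    have h4 : EW 4 = 1/2 := by
      have := hrec 4 (by norm_num)
      norm_num [h2, h3] at this
      linarith
    rw [show (1:ℕ)+3 = 4 from rfl, h4]
    norm_num
  | more n ih1 ih2 =>
    have hr := hrec (n+5) (by omega)
    norm_num at hr
    rw [show n+2+3 = n+5 from rfl, hr, show n+4 = (n+1)+3 from rfl, show n+5-2 = n+3 from rfl, ih2, ih1]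
    have e1 : ((n:ℤ)+1) - 1 = (n:ℤ) := by ring
    have e2 : ((n:ℤ)+2) - 1 = (n:ℤ)+1 := by ring
    push_cast
    have key : (2:ℚ)^((n:ℤ)-1) = (2:ℚ)^n / 2 := by
      rw [zpow_sub₀ (by norm_num : (2:ℚ) ≠ 0), zpow_one, zpow_natCast]
    rw [e1, e2, key, zpow_natCast, zpow_add₀ (by norm_num : (2:ℚ) ≠ 0) (n:ℤ) 1,
      zpow_natCast, zpow_one]
    have hq : (2:ℚ)^n ≠ 0 := pow_ne_zero _ (by norm_num)
    field_simp
    ring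
end

section
/- As formal power series in ℚ⟦z⟧, (Σ_{n≥0} E^W_n z^n) · 2(1-z)²(2+z) = z³(2-z), where E^W_0 = 0; equivalently, the ordinary generating function of the sequence E^W_n equals z³(2-z)/(2(1-z)²(2+z)). -/
open PowerSeries

/-- The ordinary generating function of `EW` equals
`z³(2-z)/(2(1-z)²(2+z))`, stated as an identity of formal power series. -/
theorem stmt_1 (EW : ℕ → ℚ)
    (h0 : EW 0 = 0) (h1 : EW 1 = 0) (h2 : EW 2 = 0) (h3 : EW 3 = 1/2)
    (hrec : ∀ n, 4 ≤ n → EW n = EW (n-1)/2 + EW (n-2)/2 + 1/4) :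
    (PowerSeries.mk EW) * (2 * (1 - PowerSeries.X)^2 * (2 + PowerSeries.X))
      = (PowerSeries.X : PowerSeries ℚ)^3 * (2 - PowerSeries.X) := by
  have e4 : (PowerSeries.C (R := ℚ) 4) = 4 := map_ofNat _ 4
  have e6 : (PowerSeries.C (R := ℚ) 6) = 6 := map_ofNat _ 6
  have e2 : (PowerSeries.C (R := ℚ) 2) = 2 := map_ofNat _ 2
  have hP : (PowerSeries.mk EW) * (2 * (1 - PowerSeries.X)^2 * (2 + PowerSeries.X))
      = PowerSeries.C (R := ℚ) 4 * (PowerSeries.mk EW * X^0)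
        - PowerSeries.C (R := ℚ) 6 * (PowerSeries.mk EW * X^1)
        + PowerSeries.C (R := ℚ) 2 * (PowerSeries.mk EW * X^3) := by
    rw [e4, e6, e2]; ring
  have hR : (PowerSeries.X : PowerSeries ℚ)^3 * (2 - PowerSeries.X)
      = PowerSeries.C (R := ℚ) 2 * X^3 - X^4 := by rw [e2]; ring
  rw [hP, hR]
  ext n
  simp only [map_sub, map_add, PowerSeries.coeff_C_mul, PowerSeries.coeff_mul_X_pow',
    coeff_mk, PowerSeries.coeff_X_pow, PowerSeries.coeff_C]
  match n with
  | 0 => norm_num [h0]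
  | 1 => norm_num [h0, h1]
  | 2 => norm_num [h1, h2]
  | 3 => norm_num [h0, h2, h3]
  | 4 =>
    have h4 : EW 4 = EW 3 / 2 + EW 2 / 2 + 1/4 := hrec 4 (by norm_num)
    norm_num [h1, h2, h3, h4]
  | (m+5) =>
    have ha := hrec (m+5) (by omega)
    have hb := hrec (m+4) (by omega)
    simp only [show m+5-1 = m+4 from rfl, show m+5-2 = m+3 from rfl,
      show m+4-1 = m+3 from rfl, show m+4-2 = m+2 from rfl,
      show m+5-3 = m+2 from rfl, Nat.sub_zero] at *
    have : ¬ (m+5 = 4) := by omega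
    simp only [if_pos (by omega : 0 ≤ m+5), if_pos (by omega : 1 ≤ m+5),
      if_pos (by omega : 3 ≤ m+5), if_neg (by omega : ¬ (m+2 = 0)), if_neg this]
    linarith
end

section
/- For all integers n ≥ 3, E^W_n = ((3n-2)·2^n - 16·(-1)^n)/(18·2^n); that is, the expected proportion of napkinless diners under trap setting is ((3n-2) - 16·(-1/2)^n)/(18n). -/
/-- For all `n ≥ 3`,
`EW n = ((3n-2)·2^n - 16·(-1)^n)/(18·2^n)`. -/
theorem stmt_2 (EW : ℕ → ℚ)
    (h1 : EW 1 = 0) (h2 : EW 2 = 0) (h3 : EW 3 = 1/2)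
    (hrec : ∀ n, 4 ≤ n → EW n = EW (n-1)/2 + EW (n-2)/2 + 1/4) :
    ∀ n : ℕ, 3 ≤ n →
      EW n = ((3*(n:ℚ)-2) * 2^n - 16 * (-1)^n) / (18 * 2^n) := by
  intro n hn
  induction n using Nat.strong_induction_on with
  | _ n ih =>
    match n, hn with
    | 3, _ => rw [h3]; norm_num
    | 4, _ =>
      have h := hrec 4 (by norm_num)
      norm_num at h
      rw [h, h3, h2]; norm_num
    | (m+5), _ =>
      have ha := ih (m+4) (by omega) (by omega)
      have hb := ih (m+3) (by omega) (by omega)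
      have h := hrec (m+5) (by omega)
      have e1 : m+5-1 = m+4 := rfl
      have e2 : m+5-2 = m+3 := rfl
      rw [e1, e2, ha, hb] at h
      rw [h]
      have h2pos : (2:ℚ)^m ≠ 0 := by positivity
      push_cast
      rw [show m+5 = m+5 from rfl]
      simp only [pow_add, pow_succ]
      field_simp
      ring
end

section
/- For all integers n ≥ 3, E^W_n ≤ n/6, and the inequality is strict for all n ≥ 4 (with equality exactly at n = 3). -/
/-- `EW n ≤ n/6` for all `n ≥ 3`, with strict inequality for
all `n ≥ 4` (and equality exactly at `n = 3`). -/
theorem stmt_3 (EW : ℕ → ℚ)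
    (h1 : EW 1 = 0) (h2 : EW 2 = 0) (h3 : EW 3 = 1/2)
    (hrec : ∀ n, 4 ≤ n → EW n = EW (n-1)/2 + EW (n-2)/2 + 1/4) :
    (∀ n : ℕ, 3 ≤ n → EW n ≤ (n:ℚ)/6) ∧
    (∀ n : ℕ, 4 ≤ n → EW n < (n:ℚ)/6) ∧
    EW 3 = (3:ℚ)/6 := by
  have key : ∀ n : ℕ, 3 ≤ n → (EW n ≤ (n:ℚ)/6 ∧ (4 ≤ n → EW n < (n:ℚ)/6)) := by
    intro n
    induction n using Nat.strong_induction_on with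
    | _ n ih =>
      intro hn
      match n, hn with
      | 3, _ => simp [h3]; norm_num
      | 4, _ =>
        have h4 : EW 4 = 1/2 := by
          have := hrec 4 (by norm_num); simp [h2, h3] at this; linarith
        constructor <;> intros <;> rw [h4] <;> norm_num
      | (m+5), _ =>
        have ih1 := ih (m+4) (by omega) (by omega)
        have ih2 := ih (m+3) (by omega) (by omega)
        have hstrict := ih1.2 (by omega)
        have hr := hrec (m+5) (by omega)
        have e1 : m + 5 - 1 = m + 4 := by omega
        have e2 : m + 5 - 2 = m + 3 := by omega
        rw [e1, e2] at hr
        have hc : ((m:ℕ)+5 : ℚ) = ((m+5 : ℕ) : ℚ) := by push_cast; ring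
        have hlt : EW (m+5) < ((m+5 : ℕ) : ℚ)/6 := by
          rw [hr]
          have c1 : ((m+4 : ℕ) : ℚ) = (m:ℚ) + 4 := by push_cast; ring
          have c2 : ((m+3 : ℕ) : ℚ) = (m:ℚ) + 3 := by push_cast; ring
          rw [c1] at hstrict
          rw [c2] at ih2
          have := ih2.1
          push_cast
          linarith
        exact ⟨le_of_lt hlt, fun _ => hlt⟩
  refine ⟨fun n hn => (key n hn).1, fun n hn => (key n (by omega)).2 hn, by rw [h3]; norm_num⟩
end

section
/- The sequence E^W_n / n converges to 1/6 as n → ∞. -/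
open Filter

lemma stmt_4_closed (EW : ℕ → ℚ)
    (h2 : EW 2 = 0) (h3 : EW 3 = 1/2)
    (hrec : ∀ n, 4 ≤ n → EW n = EW (n-1)/2 + EW (n-2)/2 + 1/4) :
    ∀ n, 2 ≤ n → EW n = n/6 - 1/9 - (8/9) * (-1/2 : ℚ)^n := by
  intro n
  induction n using Nat.strong_induction_on with
  | _ n ih =>
    intro hn
    match n, hn with
    | 2, _ => rw [h2]; norm_num
    | 3, _ => rw [h3]; norm_num
    | (m+4), _ =>
      have hr := hrec (m+4) (by omega)
      have e1 : m + 4 - 1 = m + 3 := by omega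
      have e2 : m + 4 - 2 = m + 2 := by omega
      rw [e1, e2] at hr
      rw [hr, ih (m+3) (by omega) (by omega), ih (m+2) (by omega) (by omega)]
      have p3 : (-1/2 : ℚ)^(m+3) = (-1/2)^(m+2) * (-1/2) := by ring
      have p4 : (-1/2 : ℚ)^(m+4) = (-1/2)^(m+2) * (-1/2)^2 := by ring
      rw [p3, p4]
      push_cast
      ring

/-- The sequence `EW n / n` converges to `1/6` as `n → ∞`. -/
theorem stmt_4 (EW : ℕ → ℚ)
    (h1 : EW 1 = 0) (h2 : EW 2 = 0) (h3 : EW 3 = 1/2)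
    (hrec : ∀ n, 4 ≤ n → EW n = EW (n-1)/2 + EW (n-2)/2 + 1/4) :
    Tendsto (fun n : ℕ => (EW n : ℝ) / n) atTop (nhds (1/6)) := by
  have key := stmt_4_closed EW h2 h3 hrec
  have heq : (fun n : ℕ => (EW n : ℝ) / n) =ᶠ[atTop]
      (fun n : ℕ => 1/6 - (1/9) * (1 / (n:ℝ)) - (8/9) * ((-1/2 : ℝ)^n * (1/(n:ℝ)))) := by
    filter_upwards [eventually_ge_atTop 2] with n hn
    have hne : (n : ℝ) ≠ 0 := by
      exact Nat.cast_ne_zero.mpr (by omega)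
    have hc : (EW n : ℝ) = n/6 - 1/9 - (8/9) * (-1/2 : ℝ)^n := by
      rw [key n hn]; push_cast; ring
    rw [hc]
    field_simp
  refine Tendsto.congr' heq.symm ?_
  have hinv : Tendsto (fun n : ℕ => 1 / (n:ℝ)) atTop (nhds 0) :=
    tendsto_one_div_atTop_nhds_zero_nat
  have hpow : Tendsto (fun n : ℕ => (-1/2 : ℝ)^n) atTop (nhds 0) := by
    apply tendsto_pow_atTop_nhds_zero_of_norm_lt_one
    rw [Real.norm_eq_abs, abs_lt]; constructor <;> norm_num
  have H := (tendsto_const_nhds (x := (1/6 : ℝ)) (f := atTop (α := ℕ))).sub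
    (hinv.const_mul (1/9 : ℝ)) |>.sub ((hpow.mul hinv).const_mul (8/9 : ℝ))
  simpa using H
end

section
/- Let R, I : ℕ → ℝ satisfy R_n = (R_{n-1} + I_{n-1})/2 for all n ≥ 1 and I_n = (R_{⌊(n-1)/2⌋} + I_{⌊(n-1)/2⌋} + R_{⌈(n-1)/2⌉} + I_{⌈(n-1)/2⌉})/2 for all n ≥ 1, and define E_n = R_{n-1} for n ≥ 1. Then for all integers n ≥ 3, E_n = (E_{n-1} + E_{⌊(n+1)/2⌋} + E_{⌈(n+1)/2⌉})/2. -/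
/-- If `R` and `I` satisfy the napkin-shunning recurrences and
`E n = R (n-1)`, then for all `n ≥ 3`,
`E n = (E (n-1) + E ⌊(n+1)/2⌋ + E ⌈(n+1)/2⌉)/2`.
(Here `⌊(n+1)/2⌋ = (n+1)/2` and `⌈(n+1)/2⌉ = (n+2)/2` in natural division.) -/
theorem stmt_9 (R I : ℕ → ℝ)
    (hR : ∀ n : ℕ, 1 ≤ n → R n = (R (n-1) + I (n-1)) / 2)
    (hI : ∀ n : ℕ, 1 ≤ n →
      I n = (R ((n-1)/2) + I ((n-1)/2) + R (n/2) + I (n/2)) / 2)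
    (E : ℕ → ℝ)
    (hE : ∀ n : ℕ, 1 ≤ n → E n = R (n-1)) :
    ∀ n : ℕ, 3 ≤ n → E n = (E (n-1) + E ((n+1)/2) + E ((n+2)/2)) / 2 := by
  intro n hn
  have e1 : E n = R (n-1) := hE n (by omega)
  have e2 : R (n-1) = (R (n-2) + I (n-2)) / 2 := by
    have h := hR (n-1) (by omega)
    rwa [show n-1-1 = n-2 from by omega] at h
  have e3 : I (n-2) = (R ((n-3)/2) + I ((n-3)/2) + R ((n-2)/2) + I ((n-2)/2)) / 2 := by
    have h := hI (n-2) (by omega)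
    rwa [show n-2-1 = n-3 from by omega] at h
  have e4 : E (n-1) = R (n-2) := by
    have h := hE (n-1) (by omega)
    rwa [show n-1-1 = n-2 from by omega] at h
  have e5 : E ((n+1)/2) = (R ((n-3)/2) + I ((n-3)/2)) / 2 := by
    have h := hE ((n+1)/2) (by omega)
    have h2 := hR ((n+1)/2 - 1) (by omega)
    rw [h, h2, show (n+1)/2 - 1 - 1 = (n-3)/2 from by omega]
  have e6 : E ((n+2)/2) = (R ((n-2)/2) + I ((n-2)/2)) / 2 := by
    have h := hE ((n+2)/2) (by omega)
    have h2 := hR ((n+2)/2 - 1) (by omega)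
    rw [h, h2, show (n+2)/2 - 1 - 1 = (n-2)/2 from by omega]
  rw [e1, e2, e3, e4, e5, e6]
  ring
end

section
/- Let R, I : ℕ → ℝ satisfy R_n = (R_{n-1} + I_{n-1})/2 for all n ≥ 1 and I_n = (R_{⌊(n-1)/2⌋} + I_{⌊(n-1)/2⌋} + R_{⌈(n-1)/2⌉} + I_{⌈(n-1)/2⌉})/2 for all n ≥ 1. Then for all integers n ≥ 1, I_n = R_{⌊(n+1)/2⌋} + R_{⌈(n+1)/2⌉}. -/
/-- If `R` and `I` satisfy the napkin-shunning recurrences,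
then for all `n ≥ 1`, `I n = R ⌊(n+1)/2⌋ + R ⌈(n+1)/2⌉`.
(Here `⌊(n+1)/2⌋ = (n+1)/2` and `⌈(n+1)/2⌉ = (n+2)/2` in natural division.) -/
theorem stmt_10 (R I : ℕ → ℝ)
    (hR : ∀ n : ℕ, 1 ≤ n → R n = (R (n-1) + I (n-1)) / 2)
    (hI : ∀ n : ℕ, 1 ≤ n →
      I n = (R ((n-1)/2) + I ((n-1)/2) + R (n/2) + I (n/2)) / 2) :
    ∀ n : ℕ, 1 ≤ n → I n = R ((n+1)/2) + R ((n+2)/2) := by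
  intro n hn
  have h1 : (n+1)/2 - 1 = (n-1)/2 := by omega
  have h2 : (n+2)/2 - 1 = n/2 := by omega
  rw [hI n hn, hR ((n+1)/2) (by omega), hR ((n+2)/2) (by omega), h1, h2]
  ring
end

section
/- Let E : ℕ → ℝ satisfy E_n = (E_{n-1} + E_{⌊(n+1)/2⌋} + E_{⌈(n+1)/2⌉})/2 for all n ≥ 5, let k ≥ 3 be an integer, and let α, β be real numbers such that α·i ≤ E_i ≤ β·i for every integer i with k ≤ i ≤ 2k-2. Then α·n ≤ E_n ≤ β·n for every integer n ≥ k. -/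
/-- The paper's bounding lemma: if `E` satisfies the
napkin-shunning expectation recurrence for `n ≥ 5`, `k ≥ 3`, and
`α·i ≤ E i ≤ β·i` for all `k ≤ i ≤ 2k-2`, then `α·n ≤ E n ≤ β·n` for all `n ≥ k`. -/
theorem stmt_11 (E : ℕ → ℝ)
    (hrec : ∀ n : ℕ, 5 ≤ n → E n = (E (n-1) + E ((n+1)/2) + E ((n+2)/2)) / 2)
    (k : ℕ) (hk : 3 ≤ k) (α β : ℝ)
    (hbd : ∀ i : ℕ, k ≤ i → i ≤ 2*k-2 → α * i ≤ E i ∧ E i ≤ β * i) :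
    ∀ n : ℕ, k ≤ n → α * n ≤ E n ∧ E n ≤ β * n := by
  intro n hn
  induction n using Nat.strong_induction_on with
  | _ n ih =>
    by_cases h : n ≤ 2*k-2
    · exact hbd n hn h
    · have h5 : 5 ≤ n := by omega
      obtain ⟨a1, a2⟩ := ih (n-1) (by omega) (by omega)
      obtain ⟨b1, b2⟩ := ih ((n+1)/2) (by omega) (by omega)
      obtain ⟨c1, c2⟩ := ih ((n+2)/2) (by omega) (by omega)
      rw [hrec n h5]
      have hs : (n-1) + (n+1)/2 + (n+2)/2 = 2*n := by omega
      have hs' : ((n-1 : ℕ) : ℝ) + (((n+1)/2 : ℕ) : ℝ) + (((n+2)/2 : ℕ) : ℝ)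
          = 2 * (n : ℝ) := by exact_mod_cast congrArg (Nat.cast : ℕ → ℝ) hs
      constructor
      · have : α * ((n-1 : ℕ) : ℝ) + α * (((n+1)/2 : ℕ) : ℝ) + α * (((n+2)/2 : ℕ) : ℝ)
            = 2 * (α * n) := by linear_combination α * hs'
        linarith
      · have : β * ((n-1 : ℕ) : ℝ) + β * (((n+1)/2 : ℕ) : ℝ) + β * (((n+2)/2 : ℕ) : ℝ)
            = 2 * (β * n) := by linear_combination β * hs'
        linarith
end

section
/- For all integers n ≥ 3, n/6 ≤ E^S_n ≤ 3n/16; that is, the expected proportion of napkinless diners under napkin shunning is at least 8/48 and at most 9/48. -/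
/-- For all `n ≥ 3`, `n/6 ≤ ES n ≤ 3n/16`, where `ES` is the
expected number of napkinless diners under napkin shunning. -/
theorem stmt_12 (ES : ℕ → ℚ)
    (h1 : ES 1 = 0) (h2 : ES 2 = 0) (h3 : ES 3 = 1/2) (h4 : ES 4 = 3/4)
    (hrec : ∀ n : ℕ, 5 ≤ n →
      ES n = (ES (n-1) + ES ((n+1)/2) + ES ((n+2)/2)) / 2) :
    ∀ n : ℕ, 3 ≤ n → (n:ℚ)/6 ≤ ES n ∧ ES n ≤ 3*(n:ℚ)/16 := by
  intro n
  induction n using Nat.strong_induction_on with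
  | _ n ih =>
    intro hn
    rcases lt_or_ge n 5 with h5 | h5
    · interval_cases n
      · rw [h3]; norm_num
      · rw [h4]; norm_num
    · have hrecn := hrec n h5
      have ha := ih (n-1) (by omega) (by omega)
      have hb := ih ((n+1)/2) (by omega) (by omega)
      have hc := ih ((n+2)/2) (by omega) (by omega)
      have hcast : ((n-1 : ℕ):ℚ) = (n:ℚ) - 1 := by
        have h1n : (1:ℕ) ≤ n := by omega
        push_cast [h1n]; ring
      have hsum : ((n+1)/2 : ℕ) + ((n+2)/2 : ℕ) = n + 1 := by omega
      have hcast2 : (((n+1)/2 : ℕ):ℚ) + (((n+2)/2 : ℕ):ℚ) = (n:ℚ) + 1 := by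
        rw [← Nat.cast_add, hsum]; push_cast; ring
      rw [hrecn]
      constructor
      · linarith [ha.1, hb.1, hc.1]
      · linarith [ha.2, hb.2, hc.2]
end

section
/- For all integers n ≥ 3, E^W_n ≤ E^S_n; moreover, for all integers n ≥ 4 one has the strict chain E^W_n < n/6 ≤ E^S_n. (Napkin shunning is superior to trap setting.) -/
/-- Napkin shunning is superior to trap setting:
`EW n ≤ ES n` for all `n ≥ 3`, and `EW n < n/6 ≤ ES n` for all `n ≥ 4`. -/
theorem stmt_14 (EW ES : ℕ → ℚ)
    (hW1 : EW 1 = 0) (hW2 : EW 2 = 0) (hW3 : EW 3 = 1/2)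
    (hWrec : ∀ n : ℕ, 4 ≤ n → EW n = EW (n-1)/2 + EW (n-2)/2 + 1/4)
    (hS1 : ES 1 = 0) (hS2 : ES 2 = 0) (hS3 : ES 3 = 1/2) (hS4 : ES 4 = 3/4)
    (hSrec : ∀ n : ℕ, 5 ≤ n →
      ES n = (ES (n-1) + ES ((n+1)/2) + ES ((n+2)/2)) / 2) :
    (∀ n : ℕ, 3 ≤ n → EW n ≤ ES n) ∧
    (∀ n : ℕ, 4 ≤ n → EW n < (n:ℚ)/6 ∧ (n:ℚ)/6 ≤ ES n) := by
  have hEW : ∀ n : ℕ, 3 ≤ n → EW n ≤ (n:ℚ)/6 ∧ (4 ≤ n → EW n < (n:ℚ)/6) := by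
    intro n
    induction n using Nat.strong_induction_on with
    | _ n ih =>
      intro hn
      rcases Nat.lt_or_ge n 5 with h5 | h5
      · interval_cases n
        · constructor
          · rw [hW3]; norm_num
          · intro h; omega
        · have h4 : EW 4 = EW 3/2 + EW 2/2 + 1/4 := hWrec 4 (by norm_num)
          rw [h4, hW3, hW2]
          norm_num
      · have hrec := hWrec n (by omega)
        obtain ⟨h1, h1'⟩ := ih (n-1) (by omega) (by omega)
        obtain ⟨h2, _⟩ := ih (n-2) (by omega) (by omega)
        have hb1 := h1' (by omega)
        have e1 : ((n-1:ℕ):ℚ) = (n:ℚ) - 1 := by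
          push_cast [Nat.cast_sub (by omega : 1 ≤ n)]; ring
        have e2 : ((n-2:ℕ):ℚ) = (n:ℚ) - 2 := by
          push_cast [Nat.cast_sub (by omega : 2 ≤ n)]; ring
        rw [e1] at h1 hb1
        rw [e2] at h2
        constructor
        · rw [hrec]; linarith
        · intro _; rw [hrec]; linarith
  have hES : ∀ n : ℕ, 3 ≤ n → (n:ℚ)/6 ≤ ES n := by
    intro n
    induction n using Nat.strong_induction_on with
    | _ n ih =>
      intro hn
      rcases Nat.lt_or_ge n 5 with h5 | h5
      · interval_cases n
        · rw [hS3]; norm_num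
        · rw [hS4]; norm_num
      · have hrec := hSrec n h5
        have h1 := ih (n-1) (by omega) (by omega)
        have h2 := ih ((n+1)/2) (by omega) (by omega)
        have h3 := ih ((n+2)/2) (by omega) (by omega)
        have e1 : ((n-1:ℕ):ℚ) = (n:ℚ) - 1 := by
          push_cast [Nat.cast_sub (by omega : 1 ≤ n)]; ring
        have hs : (n+1)/2 + (n+2)/2 = n+1 := by omega
        have es : (((n+1)/2:ℕ):ℚ) + (((n+2)/2:ℕ):ℚ) = (n:ℚ) + 1 := by
          exact_mod_cast congrArg (Nat.cast : ℕ → ℚ) hs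
        rw [e1] at h1
        rw [hrec]
        linarith
  refine ⟨?_, ?_⟩
  · intro n hn
    rcases Nat.lt_or_ge n 4 with h4 | h4
    · interval_cases n
      rw [hW3, hS3]
    · exact le_of_lt (lt_of_lt_of_le ((hEW n (by omega)).2 h4) (hES n (by omega)))
  · intro n hn
    exact ⟨(hEW n (by omega)).2 hn, hES n (by omega)⟩
end

section
/- For k ≥ 3, define α_k = min{ E^S_n / n : k ≤ n ≤ 2k-2 } and β_k = max{ E^S_n / n : k ≤ n ≤ 2k-2 }. Then for all k ≥ 3 one has α_k ≤ α_{k+1} ≤ β_{k+1} ≤ β_k; consequently both sequences (α_k)_{k≥3} and (β_k)_{k≥3} converge, to limits L and U with L ≤ U. -/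
open Filter

/-- With `a k = min { ES n / n : k ≤ n ≤ 2k-2 }` and
`b k = max { ES n / n : k ≤ n ≤ 2k-2 }` (for `k ≥ 3`), one has
`a k ≤ a (k+1) ≤ b (k+1) ≤ b k` for all `k ≥ 3`, and consequently both
sequences converge, to limits `L ≤ U`. -/
theorem stmt_15 (ES : ℕ → ℚ)
    (h1 : ES 1 = 0) (h2 : ES 2 = 0) (h3 : ES 3 = 1/2) (h4 : ES 4 = 3/4)
    (hrec : ∀ n : ℕ, 5 ≤ n →
      ES n = (ES (n-1) + ES ((n+1)/2) + ES ((n+2)/2)) / 2)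
    (a b : ℕ → ℝ)
    (ha : ∀ k : ℕ, 3 ≤ k →
      IsLeast ((fun n : ℕ => (ES n : ℝ) / n) '' (Set.Icc k (2*k-2))) (a k))
    (hb : ∀ k : ℕ, 3 ≤ k →
      IsGreatest ((fun n : ℕ => (ES n : ℝ) / n) '' (Set.Icc k (2*k-2))) (b k)) :
    (∀ k : ℕ, 3 ≤ k → a k ≤ a (k+1) ∧ a (k+1) ≤ b (k+1) ∧ b (k+1) ≤ b k) ∧
    ∃ L U : ℝ, Tendsto a atTop (nhds L) ∧ Tendsto b atTop (nhds U) ∧ L ≤ U := by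
  have key : ∀ k : ℕ, 3 ≤ k → ∀ n ∈ Set.Icc (k+1) (2*(k+1)-2),
      a k ≤ (ES n : ℝ) / n ∧ (ES n : ℝ) / n ≤ b k := by
    intro k hk n hn
    obtain ⟨hn1, hn2⟩ := hn
    have hn2' : n ≤ 2*k := by omega
    -- recurrence facts over ℝ
    have hE1 : (ES (2*k-1) : ℝ) = ((ES (2*k-2) : ℝ) + ES k + ES k)/2 := by
      have h := hrec (2*k-1) (by omega)
      have e1 : 2*k-1-1 = 2*k-2 := by omega
      have e2 : (2*k-1+1)/2 = k := by omega
      have e3 : (2*k-1+2)/2 = k := by omega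
      rw [e1, e2, e3] at h
      exact_mod_cast congrArg (fun q : ℚ => (q : ℝ)) h
    have hE2 : (ES (2*k) : ℝ) = ((ES (2*k-1) : ℝ) + ES k + ES (k+1))/2 := by
      have h := hrec (2*k) (by omega)
      have e1 : 2*k-1 = 2*k-1 := rfl
      have e2 : (2*k+1)/2 = k := by omega
      have e3 : (2*k+2)/2 = k+1 := by omega
      rw [e2, e3] at h
      exact_mod_cast congrArg (fun q : ℚ => (q : ℝ)) h
    -- cast facts
    have c1 : ((2*k-1 : ℕ) : ℝ) = 2*(k:ℝ)-1 := by
      have : (1:ℕ) ≤ 2*k := by omega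
      push_cast [this]; ring
    have c2 : ((2*k-2 : ℕ) : ℝ) = 2*(k:ℝ)-2 := by
      have : (2:ℕ) ≤ 2*k := by omega
      push_cast [this]; ring
    have hkpos : (0:ℝ) < (k:ℝ) := by exact_mod_cast (by omega : 0 < k)
    -- product-form bounds from ha, hb
    have low : ∀ j : ℕ, k ≤ j → j ≤ 2*k-2 → (j:ℝ) * a k ≤ (ES j : ℝ) := by
      intro j hj1 hj2
      have hm : a k ≤ (ES j : ℝ) / j := (ha k hk).2 ⟨j, ⟨hj1, hj2⟩, rfl⟩
      have hjpos : (0:ℝ) < (j:ℝ) := by exact_mod_cast (by omega : 0 < j)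
      calc (j:ℝ) * a k ≤ (j:ℝ) * ((ES j : ℝ) / j) := by
              exact mul_le_mul_of_nonneg_left hm hjpos.le
        _ = (ES j : ℝ) := by field_simp
    have high : ∀ j : ℕ, k ≤ j → j ≤ 2*k-2 → (ES j : ℝ) ≤ (j:ℝ) * b k := by
      intro j hj1 hj2
      have hm : (ES j : ℝ) / j ≤ b k := (hb k hk).2 ⟨j, ⟨hj1, hj2⟩, rfl⟩
      have hjpos : (0:ℝ) < (j:ℝ) := by exact_mod_cast (by omega : 0 < j)
      calc (ES j : ℝ) = (j:ℝ) * ((ES j : ℝ) / j) := by field_simp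
        _ ≤ (j:ℝ) * b k := mul_le_mul_of_nonneg_left hm hjpos.le
    -- bounds for ES (2k-1), ES (2k)
    have lk := low k le_rfl (by omega)
    have hk' := high k le_rfl (by omega)
    have lk1 := low (k+1) (by omega) (by omega)
    have hk1 := high (k+1) (by omega) (by omega)
    have l2k2 := low (2*k-2) (by omega) le_rfl
    have h2k2 := high (2*k-2) (by omega) le_rfl
    rw [c2] at l2k2 h2k2
    have l1 : ((2*k-1 : ℕ):ℝ) * a k ≤ (ES (2*k-1) : ℝ) := by
      rw [c1, hE1]; linarith
    have u1 : (ES (2*k-1) : ℝ) ≤ ((2*k-1 : ℕ):ℝ) * b k := by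
      rw [c1, hE1]; linarith
    have l2 : ((2*k : ℕ):ℝ) * a k ≤ (ES (2*k) : ℝ) := by
      rw [hE2]; push_cast; push_cast [c1] at l1; push_cast at lk1; linarith
    have u2 : (ES (2*k) : ℝ) ≤ ((2*k : ℕ):ℝ) * b k := by
      rw [hE2]; push_cast; push_cast [c1] at u1; push_cast at hk1; linarith
    -- now case split on n
    have hnpos : (0:ℝ) < (n:ℝ) := by exact_mod_cast (by omega : 0 < n)
    have done : ∀ (x y : ℝ), (n:ℝ) * x ≤ (ES n : ℝ) → (ES n : ℝ) ≤ (n:ℝ) * y →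
        x ≤ (ES n : ℝ)/n ∧ (ES n : ℝ)/n ≤ y := by
      intro x y hx hy
      constructor
      · rw [le_div_iff₀ hnpos]; linarith
      · rw [div_le_iff₀ hnpos]; linarith
    by_cases hc : n ≤ 2*k-2
    · exact done _ _ (low n (by omega) hc) (high n (by omega) hc)
    · by_cases hc2 : n = 2*k-1
      · subst hc2; exact done _ _ l1 u1
      · have : n = 2*k := by omega
        subst this; exact done _ _ l2 u2
  -- part 1
  have part1 : ∀ k : ℕ, 3 ≤ k → a k ≤ a (k+1) ∧ a (k+1) ≤ b (k+1) ∧ b (k+1) ≤ b k := by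
    intro k hk
    have hk1 : 3 ≤ k+1 := by omega
    obtain ⟨n, hn, hna⟩ := (ha (k+1) hk1).1
    obtain ⟨m, hm, hmb⟩ := (hb (k+1) hk1).1
    refine ⟨?_, ?_, ?_⟩
    · rw [← hna]; exact (key k hk n hn).1
    · exact (ha (k+1) hk1).2 ((hb (k+1) hk1).1)
    · rw [← hmb]; exact (key k hk m hm).2
  refine ⟨part1, ?_⟩
  -- chains
  have aleb : ∀ k : ℕ, 3 ≤ k → a k ≤ b k := fun k hk => (ha k hk).2 ((hb k hk).1)
  have amono : ∀ i j : ℕ, 3 ≤ i → i ≤ j → a i ≤ a j := by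
    intro i j hi hij
    induction j, hij using Nat.le_induction with
    | base => exact le_rfl
    | succ n hn ih => exact le_trans ih (part1 n (by omega)).1
  have bmono : ∀ i j : ℕ, 3 ≤ i → i ≤ j → b j ≤ b i := by
    intro i j hi hij
    induction j, hij using Nat.le_induction with
    | base => exact le_rfl
    | succ n hn ih => exact le_trans (part1 n (by omega)).2.2 ih
  set A : ℕ → ℝ := fun k => a (k+3) with hA
  set B : ℕ → ℝ := fun k => b (k+3) with hB
  have Amono : Monotone A := by
    intro i j hij; exact amono (i+3) (j+3) (by omega) (by omega)
  have Banti : Antitone B := by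
    intro i j hij; exact bmono (i+3) (j+3) (by omega) (by omega)
  have AleB : ∀ k, A k ≤ B k := fun k => aleb (k+3) (by omega)
  have Abdd : BddAbove (Set.range A) := by
    refine ⟨b 3, ?_⟩
    rintro x ⟨k, rfl⟩
    exact le_trans (AleB k) (bmono 3 (k+3) le_rfl (by omega))
  have Bbdd : BddBelow (Set.range B) := by
    refine ⟨a 3, ?_⟩
    rintro x ⟨k, rfl⟩
    exact le_trans (amono 3 (k+3) le_rfl (by omega)) (AleB k)
  have hAt : Tendsto A atTop (nhds (⨆ k, A k)) := tendsto_atTop_ciSup Amono Abdd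
  have hBt : Tendsto B atTop (nhds (⨅ k, B k)) := tendsto_atTop_ciInf Banti Bbdd
  refine ⟨⨆ k, A k, ⨅ k, B k, ?_, ?_, ?_⟩
  · exact (tendsto_add_atTop_iff_nat 3).1 hAt
  · exact (tendsto_add_atTop_iff_nat 3).1 hBt
  · exact le_of_tendsto_of_tendsto' hAt hBt AleB
end
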